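/- arXiv:2107.09621 — 2 statements merged into one kernel-verified Lean document; each statement's English description precedes it below -/
import Mathlib

section
/- (Theorem 1, accuracy form) Let K ≥ 1, g_k > 0, P > 0, σ² > 0, B > 0, T > 0, T₀ > 0, N ≥ 1, and let Θ be a strictly monotone increasing function on the interval [0, T/(N·T₀)] mapping the number of sensing cycles C to recognition accuracy A = Θ(C). For each C ∈ [0, T/(N·T₀)], let A* = Θ(C) and let R* be the maximum of min_{k=1,…,K} (t_k/T)·B·log₂(1 + g_k P/σ²) over t_1,…,t_K ≥ 0 with N·T₀·C + ∑_{k=1}^K t_k = T. Then the optimal pair (A*, R*) satisfies N·T₀·Θ⁻¹(A*) + (∑_{k=1}^K T/(B·log₂(1 + g_k P/σ²)))·R* = T, where Θ⁻¹ denotes the inverse of Θ on its range. -/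
open Real in
/-- Theorem 1, accuracy form: with a strictly increasing accuracy model
`A = Θ(C)` on `[0, T/(N·T₀)]`, the optimal pair `(A*, R*)` satisfies
`N·T₀·Θ⁻¹(A*) + (∑_k T/(B·log₂(1 + g_k P/σ²)))·R* = T`, where `Θ⁻¹` is the inverse of `Θ`
on its range (formalized by `Function.invFunOn Θ (Set.Icc 0 (T/(N·T₀)))`). -/
theorem isac_theorem_one_accuracy_form
    (K : ℕ) (hK : 1 ≤ K) (g : Fin K → ℝ) (hg : ∀ k, 0 < g k)
    (P σ2 B T T0 : ℝ) (hP : 0 < P) (hσ2 : 0 < σ2) (hB : 0 < B) (hT : 0 < T) (hT0 : 0 < T0)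
    (N : ℕ) (hN : 1 ≤ N)
    (Θ : ℝ → ℝ) (hΘ : StrictMonoOn Θ (Set.Icc 0 (T / ((N : ℝ) * T0))))
    (C : ℝ) (hC : C ∈ Set.Icc 0 (T / ((N : ℝ) * T0)))
    (Astar Rstar : ℝ) (hAstar : Astar = Θ C)
    (hRstar : IsGreatest
      {R : ℝ | ∃ t : Fin K → ℝ, (∀ k, 0 ≤ t k) ∧ ((N : ℝ) * T0 * C + ∑ k, t k = T) ∧
        R = ⨅ k, (t k / T) * B * logb 2 (1 + g k * P / σ2)} Rstar) :
    (N : ℝ) * T0 * Function.invFunOn Θ (Set.Icc 0 (T / ((N : ℝ) * T0))) Astar +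
      (∑ k, T / (B * logb 2 (1 + g k * P / σ2))) * Rstar = T := by
  haveI : Nonempty (Fin K) := ⟨⟨0, hK⟩⟩
  -- inverse function evaluates to C
  have hinv : Function.invFunOn Θ (Set.Icc 0 (T / ((N : ℝ) * T0))) Astar = C := by
    rw [hAstar]
    exact hΘ.injOn.leftInvOn_invFunOn hC
  rw [hinv]
  set c : Fin K → ℝ := fun k => B * logb 2 (1 + g k * P / σ2) with hc
  have hcpos : ∀ k, 0 < c k := by
    intro k
    have h1 : (1 : ℝ) < 1 + g k * P / σ2 := by
      have hgk := hg k
      have : 0 < g k * P / σ2 := by positivity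
      linarith
    have h2 : 0 < logb 2 (1 + g k * P / σ2) := Real.logb_pos (by norm_num) h1
    exact mul_pos hB h2
  set S : ℝ := T - (N : ℝ) * T0 * C with hS
  have hSnn : 0 ≤ S := by
    have hNT0 : 0 < (N : ℝ) * T0 := by
      have : (1 : ℝ) ≤ (N : ℝ) := by exact_mod_cast hN
      nlinarith
    have hC2 := (le_div_iff₀ hNT0).mp hC.2
    nlinarith
  set Sg : ℝ := ∑ k, T / c k with hSg
  have hSgpos : 0 < Sg := by
    apply Finset.sum_pos
    · intro k _
      exact div_pos hT (hcpos k)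
    · exact Finset.univ_nonempty
  -- show Rstar = S / Sg
  -- upper bound: any feasible R ≤ S / Sg
  have hub : ∀ R ∈ {R : ℝ | ∃ t : Fin K → ℝ, (∀ k, 0 ≤ t k) ∧ ((N : ℝ) * T0 * C + ∑ k, t k = T) ∧
        R = ⨅ k, (t k / T) * B * logb 2 (1 + g k * P / σ2)}, R ≤ S / Sg := by
    rintro R ⟨t, ht0, htsum, hR⟩
    have hbdd : BddBelow (Set.range fun k => (t k / T) * B * logb 2 (1 + g k * P / σ2)) :=
      (Set.finite_range _).bddBelow
    have hRle : ∀ k, R ≤ (t k / T) * c k := by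
      intro k
      rw [hR]
      have := ciInf_le hbdd k
      calc (⨅ k, (t k / T) * B * logb 2 (1 + g k * P / σ2)) ≤
          (t k / T) * B * logb 2 (1 + g k * P / σ2) := this
        _ = (t k / T) * c k := by rw [hc]; ring
    have key : R * Sg ≤ S := by
      have h1 : ∀ k, R * (T / c k) ≤ t k := by
        intro k
        have hck := hcpos k
        have h := mul_le_mul_of_nonneg_right (hRle k) (le_of_lt (div_pos hT hck))
        calc R * (T / c k) ≤ ((t k / T) * c k) * (T / c k) := h
          _ = t k := by field_simp
      have h2 : R * Sg = ∑ k, R * (T / c k) := by rw [hSg, Finset.mul_sum]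
      have h3 : ∑ k, R * (T / c k) ≤ ∑ k, t k := Finset.sum_le_sum fun k _ => h1 k
      rw [h2]
      calc ∑ k, R * (T / c k) ≤ ∑ k, t k := h3
        _ = S := by rw [hS]; linarith
    calc R = R * Sg / Sg := by field_simp
      _ ≤ S / Sg := (div_le_div_iff_of_pos_right hSgpos).mpr key
  -- membership: S/Sg is attained
  have hmem : (S / Sg) ∈ {R : ℝ | ∃ t : Fin K → ℝ, (∀ k, 0 ≤ t k) ∧
      ((N : ℝ) * T0 * C + ∑ k, t k = T) ∧
      R = ⨅ k, (t k / T) * B * logb 2 (1 + g k * P / σ2)} := by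
    refine ⟨fun k => (S / Sg) * (T / c k), ?_, ?_, ?_⟩
    · intro k
      have := hcpos k
      positivity
    · have : ∑ k, (S / Sg) * (T / c k) = (S / Sg) * Sg := by rw [hSg, Finset.mul_sum]
      rw [this, div_mul_cancel₀ _ (ne_of_gt hSgpos), hS]
      ring
    · have heq : ∀ k, ((S / Sg) * (T / c k) / T) * B * logb 2 (1 + g k * P / σ2) = S / Sg := by
        intro k
        have hck := hcpos k
        have : ((S / Sg) * (T / c k) / T) * B * logb 2 (1 + g k * P / σ2)
            = ((S / Sg) * (T / c k) / T) * c k := by rw [hc]; ring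
        rw [this]
        field_simp
      simp only [heq]
      exact (ciInf_const).symm
  have hle : Rstar ≤ S / Sg := hub Rstar hRstar.1
  have hge : S / Sg ≤ Rstar := hRstar.2 hmem
  have hReq : Rstar = S / Sg := le_antisymm hle hge
  have : Sg * Rstar = S := by
    rw [hReq]
    field_simp
  rw [this, hS]
  ring
end

section
/- Let K ≥ 1, g_k > 0, P > 0, σ² > 0, B > 0, T > 0, T₀ > 0, N ≥ 1, set C_max = T/(N·T₀) and D = ∑_{k=1}^K T/(B·log₂(1 + g_k P/σ²)), and let Θ : [0, C_max] → ℝ be strictly increasing and continuous. Define the achievable accuracy–rate region as the set of pairs (A, R) with R ≥ 0 for which there exist C ∈ [0, C_max] and t_1,…,t_K ≥ 0 with N·T₀·C + ∑_{k=1}^K t_k = T, A ≤ Θ(C), and R ≤ min_k (t_k/T)·B·log₂(1 + g_k P/σ²). Then (A, R) is achievable if and only if A ≤ Θ(C_max), R ≥ 0, and N·T₀·Θ⁻¹(max(A, Θ(0))) + D·R ≤ T. -/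
open Real in
/-- characterization of the achievable accuracy–rate region: a pair `(A, R)`
with `R ≥ 0` is achievable (i.e. there exist `C ∈ [0, C_max]` and a nonnegative time
allocation `t` with `N·T₀·C + ∑ t_k = T`, `A ≤ Θ(C)` and
`R ≤ min_k (t_k/T)·B·log₂(1 + g_k P/σ²)`) if and only if `A ≤ Θ(C_max)`, `R ≥ 0`, and
`N·T₀·Θ⁻¹(max(A, Θ(0))) + D·R ≤ T`, where `C_max = T/(N·T₀)`,
`D = ∑_k T/(B·log₂(1 + g_k P/σ²))`, and `Θ⁻¹` is the inverse of `Θ` on `[0, C_max]`. -/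
theorem isac_accuracy_rate_region
    (K : ℕ) (hK : 1 ≤ K) (g : Fin K → ℝ) (hg : ∀ k, 0 < g k)
    (P σ2 B T T0 : ℝ) (hP : 0 < P) (hσ2 : 0 < σ2) (hB : 0 < B) (hT : 0 < T) (hT0 : 0 < T0)
    (N : ℕ) (hN : 1 ≤ N)
    (Cmax : ℝ) (hCmax : Cmax = T / ((N : ℝ) * T0))
    (D : ℝ) (hD : D = ∑ k, T / (B * logb 2 (1 + g k * P / σ2)))
    (Θ : ℝ → ℝ) (hΘmono : StrictMonoOn Θ (Set.Icc 0 Cmax))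
    (hΘcont : ContinuousOn Θ (Set.Icc 0 Cmax))
    (A R : ℝ) :
    (0 ≤ R ∧ ∃ C ∈ Set.Icc (0 : ℝ) Cmax, ∃ t : Fin K → ℝ,
        (∀ k, 0 ≤ t k) ∧ ((N : ℝ) * T0 * C + ∑ k, t k = T) ∧ A ≤ Θ C ∧
        R ≤ ⨅ k, (t k / T) * B * logb 2 (1 + g k * P / σ2)) ↔
      (A ≤ Θ Cmax ∧ 0 ≤ R ∧
        (N : ℝ) * T0 * Function.invFunOn Θ (Set.Icc 0 Cmax) (max A (Θ 0)) + D * R ≤ T) := by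
  have hNpos : (0:ℝ) < (N:ℝ) := by exact_mod_cast hN
  have hNT0 : (0:ℝ) < (N:ℝ) * T0 := mul_pos hNpos hT0
  have hr : ∀ k, 0 < B * logb 2 (1 + g k * P / σ2) := by
    intro k
    have h1 : (0:ℝ) < g k * P / σ2 := by have := hg k; positivity
    exact mul_pos hB (Real.logb_pos one_lt_two (by linarith))
  have hCmaxpos : 0 < Cmax := by rw [hCmax]; positivity
  have hmem0 : (0:ℝ) ∈ Set.Icc (0:ℝ) Cmax := ⟨le_refl 0, hCmaxpos.le⟩
  have hmemC : Cmax ∈ Set.Icc (0:ℝ) Cmax := ⟨hCmaxpos.le, le_rfl⟩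
  have hinj := hΘmono.injOn
  have hne : Nonempty (Fin K) := ⟨⟨0, hK⟩⟩
  constructor
  · rintro ⟨hR, C, hC, t, ht0, hsum, hAC, hRinf⟩
    have hΘ0C : Θ 0 ≤ Θ C := hΘmono.monotoneOn hmem0 hC hC.1
    have hA' : max A (Θ 0) ≤ Θ C := max_le hAC hΘ0C
    obtain ⟨C', hC'mem, hC'eq⟩ := intermediate_value_Icc hC.1
      (hΘcont.mono (Set.Icc_subset_Icc le_rfl hC.2)) ⟨le_max_right _ _, hA'⟩
    have hC'S : C' ∈ Set.Icc (0:ℝ) Cmax := ⟨hC'mem.1, hC'mem.2.trans hC.2⟩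
    have hex : ∃ a ∈ Set.Icc (0:ℝ) Cmax, Θ a = max A (Θ 0) := ⟨C', hC'S, hC'eq⟩
    have hinv : Function.invFunOn Θ (Set.Icc 0 Cmax) (max A (Θ 0)) = C' :=
      hinj (Function.invFunOn_mem hex) hC'S
        (by rw [Function.invFunOn_eq hex, hC'eq])
    refine ⟨hAC.trans (hΘmono.monotoneOn hC hmemC hC.2), hR, ?_⟩
    rw [hinv]
    have htk : ∀ k, R * (T / (B * logb 2 (1 + g k * P / σ2))) ≤ t k := by
      intro k
      have h1 : R ≤ (t k / T) * B * logb 2 (1 + g k * P / σ2) :=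
        le_trans hRinf (ciInf_le (Finite.bddBelow_range _) k)
      have hrk := hr k
      have h2 : t k / T * B * logb 2 (1 + g k * P / σ2)
          = t k * (B * logb 2 (1 + g k * P / σ2)) / T := by ring
      rw [h2, le_div_iff₀ hT] at h1
      rw [show R * (T / (B * logb 2 (1 + g k * P / σ2)))
          = R * T / (B * logb 2 (1 + g k * P / σ2)) by ring, div_le_iff₀ hrk]
      linarith
    have hDR : D * R ≤ ∑ k, t k := by
      rw [hD, Finset.sum_mul]
      refine Finset.sum_le_sum fun k _ => ?_
      rw [mul_comm]; exact htk k
    have hCC : (N:ℝ) * T0 * C' ≤ (N:ℝ) * T0 * C :=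
      mul_le_mul_of_nonneg_left hC'mem.2 hNT0.le
    linarith
  · rintro ⟨hACmax, hR, hineq⟩
    have hΘ0max : Θ 0 ≤ Θ Cmax := hΘmono.monotoneOn hmem0 hmemC hCmaxpos.le
    have hA' : max A (Θ 0) ≤ Θ Cmax := max_le hACmax hΘ0max
    obtain ⟨c, hcmem, hceq⟩ := intermediate_value_Icc hCmaxpos.le hΘcont
      ⟨le_max_right _ _, hA'⟩
    have hex : ∃ a ∈ Set.Icc (0:ℝ) Cmax, Θ a = max A (Θ 0) := ⟨c, hcmem, hceq⟩
    set Cstar := Function.invFunOn Θ (Set.Icc 0 Cmax) (max A (Θ 0)) with hCstar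
    have hCstarmem : Cstar ∈ Set.Icc (0:ℝ) Cmax := Function.invFunOn_mem hex
    have hCstareq : Θ Cstar = max A (Θ 0) := Function.invFunOn_eq hex
    have hKpos : (0:ℝ) < (K:ℝ) := by exact_mod_cast hK
    set s := (T - (N:ℝ) * T0 * Cstar - D * R) / K with hs
    have hs0 : 0 ≤ s := div_nonneg (by linarith) hKpos.le
    refine ⟨hR, Cstar, hCstarmem,
      fun k => R * T / (B * logb 2 (1 + g k * P / σ2)) + s, ?_, ?_, ?_, ?_⟩
    · intro k
      have hrk := hr k
      have : 0 ≤ R * T / (B * logb 2 (1 + g k * P / σ2)) := by positivity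
      linarith
    · have h1 : ∑ k, (R * T / (B * logb 2 (1 + g k * P / σ2)) + s)
          = R * D + (K:ℝ) * s := by
        rw [Finset.sum_add_distrib, Finset.sum_const, Finset.card_univ, Fintype.card_fin,
          nsmul_eq_mul, hD, Finset.mul_sum]
        congr 1
        refine Finset.sum_congr rfl fun k _ => ?_
        rw [mul_div_assoc]
      rw [h1, hs]
      field_simp
      ring
    · rw [hCstareq]; exact le_max_left _ _
    · refine le_ciInf fun k => ?_
      have hrk := hr k
      have key : ∀ r : ℝ, r ≠ 0 → (R * T / r + s) / T * r = R + s * r / T := by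
        intro r hr0
        field_simp
      rw [mul_assoc, key _ hrk.ne']
      have : 0 ≤ s * (B * logb 2 (1 + g k * P / σ2)) / T := by positivity
      linarith
end
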